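/- Fix θ ∈ (0,1). Define μ₀ = μ, η_n = θ·W₁(μ_n, ν), and μ_{n+1} = (f_n)_#μ_n where f_n(x) = x − η_n∇u_n(x) (a.e., with u_n a Kantorovich potential for (μ_n, ν)). Let T₀ be an optimal map for (μ,ν) and N(θ) = ⌈log_{1−θ}(1 − ℓ₀(T₀)/W₁(μ,ν))⌉ − 1. Then for all 0 ≤ n ≤ N(θ), W₁(μ_n, ν) = (1−θ)^n · W₁(μ, ν). -/

import Mathlib

open MeasureTheory

noncomputable section

abbrev Euc (d : ℕ) := EuclideanSpace ℝ (Fin d)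

/-- The Wasserstein-1 distance, defined through Kantorovich duality as the supremum of
`∫ u dμ - ∫ u dν` over 1-Lipschitz functions `u`. -/
def W1 {d : ℕ} (μ ν : Measure (Euc d)) : ℝ :=
  sSup {r : ℝ | ∃ u : Euc d → ℝ, LipschitzWith 1 u ∧ r = (∫ x, u x ∂μ) - ∫ y, u y ∂ν}

/-- `u` is a Kantorovich potential for the pair `(μ, ν)`. -/
def IsKantorovichPotential {d : ℕ} (u : Euc d → ℝ) (μ ν : Measure (Euc d)) : Prop :=
  LipschitzWith 1 u ∧ (∫ x, u x ∂μ) - ∫ y, u y ∂ν = W1 μ ν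

/-- `T` is an optimal transport map for the pair `(μ, ν)`. -/
def IsOptimalMap {d : ℕ} (T : Euc d → Euc d) (μ ν : Measure (Euc d)) : Prop :=
  Measure.map T μ = ν ∧ (∫ x, ‖x - T x‖ ∂μ) = W1 μ ν

/-- The minimal transport length `ℓ₀(T) = essinf_μ |Id - T|`. -/
def ell0 {d : ℕ} (T : Euc d → Euc d) (μ : Measure (Euc d)) : ℝ :=
  essInf (fun x => ‖x - T x‖) μ

/-!
A Kantorovich potential `u₀` for `(μ, ν)` satisfies `u₀ x - u₀ (T₀ x) = ‖x - T₀ x‖` for `μ`-a.e.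
`x`, so it decreases at unit speed along every segment `[x, T₀ x]`, and these have length at least
`ℓ₀`. Let `G_s` move each `x` a distance `s` towards `T₀ x`. For `s ≤ ℓ₀`, `u₀` still certifies
that the coupling `(G_s x, T₀ x)` is optimal, so `W₁((G_s)_# μ, ν) = W₁(μ, ν) - s`. For `s < ℓ₀`,
`G_s` has a Lipschitz inverse on the good set (Evans–Gangbo), so `(G_s)_# μ ≪ Lebesgue`, and any
potential `u` of `((G_s)_# μ, ν)` is differentiable at `G_s x` with gradient `-(T₀ x - x)/‖T₀ x - x‖`.
A gradient step of length `η` therefore maps `G_s` to `G_{s+η}`, and `η_n = θ W₁(μ_n, ν)` gives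
`μ_n = (G_{s_n})_# μ` with `s_n = (1 - (1 - θ)^n) W₁(μ, ν)` as long as `s_n < ℓ₀`, that is, for
`n ≤ N(θ)`.
-/

open scoped RealInnerProductSpace

section RayGeometry

variable {E : Type*} [NormedAddCommGroup E]

lemma LipschitzWith.sub_le_norm_sub {u : E → ℝ} (hu : LipschitzWith 1 u) (x y : E) :
    u x - u y ≤ ‖x - y‖ := by
  have := hu.le_add_mul x y
  rw [NNReal.coe_one, one_mul, dist_eq_norm] at this
  linarith

variable [NormedSpace ℝ E]

lemma LipschitzWith.sub_eq_norm_of_mem_segment {u : E → ℝ} (hu : LipschitzWith 1 u) {a b c : E}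
    (hab : u a - u b = ‖a - b‖) (hc : c ∈ segment ℝ a b) : u a - u c = ‖a - c‖ := by
  have hsplit : ‖a - c‖ + ‖c - b‖ = ‖a - b‖ := by
    simpa only [dist_eq_norm] using dist_add_dist_of_mem_segment hc
  linarith [hu.sub_le_norm_sub a c, hu.sub_le_norm_sub c b]

/-- The point at distance `t` from `x` on the ray towards `y` (just `x` when `y = x`). -/
def rayPoint (x y : E) (t : ℝ) : E := x + t • ‖y - x‖⁻¹ • (y - x)

@[simp] lemma rayPoint_zero (x y : E) : rayPoint x y 0 = x := by simp [rayPoint]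

lemma rayPoint_add (x y : E) (s t : ℝ) :
    rayPoint x y (s + t) = rayPoint x y s + t • ‖y - x‖⁻¹ • (y - x) := by
  unfold rayPoint; module

lemma rayPoint_sub (x y : E) (s t : ℝ) :
    rayPoint x y (s - t) = rayPoint x y s - t • ‖y - x‖⁻¹ • (y - x) := by
  unfold rayPoint; module

lemma rayPoint_mem_segment {x y : E} {t : ℝ} (h0 : 0 ≤ t) (h1 : t ≤ ‖x - y‖) :
    rayPoint x y t ∈ segment ℝ x y := by
  rw [norm_sub_rev] at h1
  have hc : t * ‖y - x‖⁻¹ ∈ Set.Icc (0 : ℝ) 1 :=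
    ⟨by positivity, mul_inv_le_one_of_le₀ h1 (norm_nonneg _)⟩
  simpa [rayPoint, AffineMap.lineMap_apply_module', smul_smul, add_comm] using
    lineMap_mem_segment (𝕜 := ℝ) x y hc

lemma norm_sub_rayPoint {x y : E} {t : ℝ} (h0 : 0 ≤ t) (h1 : t ≤ ‖x - y‖) :
    ‖x - rayPoint x y t‖ = t := by
  rcases eq_or_ne x y with rfl | hxy
  · simp only [sub_self, norm_zero] at h1
    simp [le_antisymm h1 h0]
  rw [rayPoint, sub_add_cancel_left, norm_neg, norm_smul, norm_smul, norm_inv, norm_norm,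
    inv_mul_cancel₀ (norm_ne_zero_iff.2 (sub_ne_zero.2 hxy.symm)), Real.norm_of_nonneg h0, mul_one]

lemma norm_rayPoint_sub {x y : E} {t : ℝ} (h0 : 0 ≤ t) (h1 : t ≤ ‖x - y‖) :
    ‖rayPoint x y t - y‖ = ‖x - y‖ - t := by
  have hsplit := dist_add_dist_of_mem_segment (rayPoint_mem_segment h0 h1)
  rw [dist_eq_norm, dist_eq_norm, dist_eq_norm, norm_sub_rayPoint h0 h1] at hsplit
  linarith

lemma rayPoint_rayPoint {x y : E} {s : ℝ} (h0 : 0 ≤ s) (h1 : s < ‖x - y‖) (t : ℝ) :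
    rayPoint (rayPoint x y s) y t = rayPoint x y (s + t) := by
  have hxy : 0 < ‖y - x‖ := by rw [norm_sub_rev]; linarith
  have hrest : y - rayPoint x y s = (1 - s * ‖y - x‖⁻¹) • (y - x) := by
    unfold rayPoint; module
  have hc : 0 < 1 - s * ‖y - x‖⁻¹ := by
    rw [sub_pos, mul_inv_lt_iff₀ hxy, one_mul, norm_sub_rev]; exact h1
  rw [rayPoint, hrest, norm_smul, Real.norm_of_nonneg hc.le, rayPoint_add, smul_smul, smul_smul]
  congr 1
  rw [smul_smul]
  congr 1
  have hgap : ‖y - x‖ - s ≠ 0 := sub_ne_zero.2 (by rw [norm_sub_rev]; exact h1.ne')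
  field_simp

lemma LipschitzWith.apply_rayPoint {u : E → ℝ} (hu : LipschitzWith 1 u) {x y : E}
    (hsat : u x - u y = ‖x - y‖) {t : ℝ} (h0 : 0 ≤ t) (h1 : t ≤ ‖x - y‖) :
    u (rayPoint x y t) = u x - t := by
  have := hu.sub_eq_norm_of_mem_segment hsat (rayPoint_mem_segment h0 h1)
  rw [norm_sub_rayPoint h0 h1] at this
  linarith

variable {F : Type*} [NormedAddCommGroup F] [InnerProductSpace ℝ F]

/-- Saturation forces the gradient: the slope of `u` towards `y` is `-1`, the largest slope a
1-Lipschitz function can have. -/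
lemma LipschitzWith.gradient_eq_of_sub_eq_norm [CompleteSpace F] {u : F → ℝ}
    (hu : LipschitzWith 1 u) {x y : F} (hxy : x ≠ y) (hsat : u x - u y = ‖x - y‖)
    (hd : DifferentiableAt ℝ u x) : gradient u x = -(‖y - x‖⁻¹ • (y - x)) := by
  set e : F := ‖y - x‖⁻¹ • (y - x)
  have he : ‖e‖ = 1 := by
    rw [norm_smul, norm_inv, norm_norm,
      inv_mul_cancel₀ (norm_ne_zero_iff.2 (sub_ne_zero.2 hxy.symm))]
  have hpos : 0 < ‖x - y‖ := norm_pos_iff.2 (sub_ne_zero.2 hxy)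
  have hline : HasDerivAt (fun r : ℝ => rayPoint x y r) e 0 := by
    simpa [rayPoint] using ((hasDerivAt_id (0 : ℝ)).smul_const e).const_add x
  have hslope : HasDerivAt (fun r : ℝ => u (rayPoint x y r)) (fderiv ℝ u x e) 0 :=
    hd.hasFDerivAt.comp_hasDerivAt_of_eq 0 hline (by simp)
  have hunit : HasDerivWithinAt (fun r : ℝ => u (rayPoint x y r)) (-1)
      (Set.Icc 0 ‖x - y‖) 0 := by
    have hlin : HasDerivWithinAt (fun r : ℝ => u x - r) (-1) (Set.Icc 0 ‖x - y‖) 0 := by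
      simpa using ((hasDerivAt_id (0 : ℝ)).const_sub (u x)).hasDerivWithinAt
    exact hlin.congr (fun r hr => hu.apply_rayPoint hsat hr.1 hr.2) (by simp)
  have hfderiv : fderiv ℝ u x e = -1 :=
    ((uniqueDiffOn_Icc hpos) 0 ⟨le_rfl, hpos.le⟩).eq_deriv _ hslope.hasDerivWithinAt hunit
  have hinner : ⟪gradient u x, e⟫ = -1 := by
    rw [gradient, InnerProductSpace.toDual_symm_apply, hfderiv]
  have hgrad : ‖gradient u x‖ ≤ 1 := by
    rw [gradient, LinearIsometryEquiv.norm_map]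
    simpa using norm_fderiv_le_of_lipschitz ℝ hu (x₀ := x)
  have hsq : ‖gradient u x + e‖ ^ 2 ≤ 0 := by
    rw [norm_add_sq_real, hinner, he]
    nlinarith [norm_nonneg (gradient u x)]
  exact eq_neg_of_add_eq_zero_left
    (norm_eq_zero.1 (pow_eq_zero_iff two_ne_zero |>.1 (le_antisymm hsq (sq_nonneg _))))

lemma LipschitzWith.rayPoint_sub_smul_gradient [CompleteSpace F] {u : F → ℝ}
    (hu : LipschitzWith 1 u) {x y : F} {s : ℝ} (h0 : 0 ≤ s) (h1 : s < ‖x - y‖)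
    (hsat : u (rayPoint x y s) - u y = ‖rayPoint x y s - y‖)
    (hd : DifferentiableAt ℝ u (rayPoint x y s)) (η : ℝ) :
    rayPoint x y s - η • gradient u (rayPoint x y s) = rayPoint x y (s + η) := by
  have hne : rayPoint x y s ≠ y := by
    rw [← norm_pos_iff.trans sub_ne_zero, norm_rayPoint_sub h0 h1.le]; linarith
  rw [hu.gradient_eq_of_sub_eq_norm hne hsat hd, smul_neg, sub_neg_eq_add,
    ← rayPoint_rayPoint h0 h1]
  rfl


/-- The Evans–Gangbo estimate: compare `u` at the four points `yᵢ ± δ • eᵢ` and use the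
parallelogram law. -/
lemma LipschitzWith.mul_norm_sub_le_of_unit_slope {u : F → ℝ} (hu : LipschitzWith 1 u)
    {y₁ y₂ e₁ e₂ : F} {δ : ℝ} (hδ : 0 ≤ δ) (he₁ : ‖e₁‖ = 1) (he₂ : ‖e₂‖ = 1)
    (h₁p : u (y₁ + δ • e₁) = u y₁ - δ) (h₁m : u (y₁ - δ • e₁) = u y₁ + δ)
    (h₂p : u (y₂ + δ • e₂) = u y₂ - δ) (h₂m : u (y₂ - δ • e₂) = u y₂ + δ) :
    δ * ‖e₁ - e₂‖ ≤ ‖y₁ - y₂‖ := by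
  set w := y₁ - y₂
  set p := e₁ + e₂
  have hplus : u (y₂ - δ • e₂) - u (y₁ + δ • e₁) ≤ ‖w + δ • p‖ := by
    simpa only [show y₂ - δ • e₂ - (y₁ + δ • e₁) = -(w + δ • p) by module, norm_neg]
      using hu.sub_le_norm_sub (y₂ - δ • e₂) (y₁ + δ • e₁)
  have hminus : u (y₁ - δ • e₁) - u (y₂ + δ • e₂) ≤ ‖w - δ • p‖ := by
    simpa only [show y₁ - δ • e₁ - (y₂ + δ • e₂) = w - δ • p by module]
      using hu.sub_le_norm_sub (y₁ - δ • e₁) (y₂ + δ • e₂)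
  rw [h₁p, h₂m] at hplus
  rw [h₁m, h₂p] at hminus
  have hpar := parallelogram_law_with_norm ℝ w (δ • p)
  rw [norm_smul, Real.norm_of_nonneg hδ] at hpar
  have hdir : ‖p‖ ^ 2 + ‖e₁ - e₂‖ ^ 2 = 4 := by
    rw [parallelogram_law_with_norm ℝ e₁ e₂, he₁, he₂]
    norm_num
  have hsum : (4 * δ) ^ 2 ≤ (‖w + δ • p‖ + ‖w - δ • p‖) ^ 2 :=
    pow_le_pow_left₀ (by positivity) (by linarith) 2
  have hsq : (δ * ‖e₁ - e₂‖) ^ 2 ≤ ‖w‖ ^ 2 := by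
    nlinarith [sq_nonneg (‖w + δ • p‖ - ‖w - δ • p‖)]
  exact pow_le_pow_iff_left₀ (by positivity) (norm_nonneg _) two_ne_zero |>.1 hsq

/-- With the margin `δ = min s (ℓ - s)` both points `rayPoint xᵢ yᵢ s ± δ • eᵢ` stay on the
saturated segments, so the Evans–Gangbo estimate applies. -/
lemma LipschitzWith.norm_sub_le_mul_norm_rayPoint_sub {u : F → ℝ} (hu : LipschitzWith 1 u)
    {ℓ s : ℝ} (hs : 0 < s) (hsℓ : s < ℓ) {x₁ y₁ x₂ y₂ : F}
    (h₁ : ℓ ≤ ‖x₁ - y₁‖) (hsat₁ : u x₁ - u y₁ = ‖x₁ - y₁‖)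
    (h₂ : ℓ ≤ ‖x₂ - y₂‖) (hsat₂ : u x₂ - u y₂ = ‖x₂ - y₂‖) :
    ‖x₁ - x₂‖ ≤ (1 + s / min s (ℓ - s)) * ‖rayPoint x₁ y₁ s - rayPoint x₂ y₂ s‖ := by
  set δ := min s (ℓ - s)
  have hδ : 0 < δ := lt_min hs (by linarith)
  have hδs : δ ≤ s := min_le_left _ _
  have hδℓ : δ ≤ ℓ - s := min_le_right _ _
  have interior : ∀ {x y : F}, ℓ ≤ ‖x - y‖ → u x - u y = ‖x - y‖ →
      ‖‖y - x‖⁻¹ • (y - x)‖ = 1 ∧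
      u (rayPoint x y s + δ • ‖y - x‖⁻¹ • (y - x)) = u (rayPoint x y s) - δ ∧
      u (rayPoint x y s - δ • ‖y - x‖⁻¹ • (y - x)) = u (rayPoint x y s) + δ := by
    intro x y hℓ hsat
    have hval : ∀ t, 0 ≤ t → t ≤ ℓ → u (rayPoint x y t) = u x - t := fun t h0 h1 =>
      hu.apply_rayPoint hsat h0 (h1.trans hℓ)
    refine ⟨?_, ?_, ?_⟩
    · rw [norm_smul, norm_inv, norm_norm, inv_mul_cancel₀ (by rw [norm_sub_rev]; linarith)]
    · rw [← rayPoint_add, hval _ (by linarith) (by linarith), hval _ hs.le hsℓ.le]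
      ring
    · rw [← rayPoint_sub, hval _ (by linarith) (by linarith), hval _ hs.le hsℓ.le]
      ring
  obtain ⟨he₁, hp₁, hm₁⟩ := interior h₁ hsat₁
  obtain ⟨he₂, hp₂, hm₂⟩ := interior h₂ hsat₂
  have hdir := hu.mul_norm_sub_le_of_unit_slope hδ.le he₁ he₂ hp₁ hm₁ hp₂ hm₂
  set e₁ := ‖y₁ - x₁‖⁻¹ • (y₁ - x₁)
  set e₂ := ‖y₂ - x₂‖⁻¹ • (y₂ - x₂)
  set d := ‖rayPoint x₁ y₁ s - rayPoint x₂ y₂ s‖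
  have hstart : x₁ - x₂ = (rayPoint x₁ y₁ s - rayPoint x₂ y₂ s) - s • (e₁ - e₂) := by
    simp only [rayPoint, e₁, e₂]
    module
  have hshift : s * ‖e₁ - e₂‖ ≤ s / δ * d := by
    rw [div_mul_eq_mul_div, le_div_iff₀ hδ]
    nlinarith
  calc ‖x₁ - x₂‖ ≤ d + ‖s • (e₁ - e₂)‖ := hstart ▸ _root_.norm_sub_le _ _
    _ = d + s * ‖e₁ - e₂‖ := by rw [norm_smul, Real.norm_of_nonneg hs.le]
    _ ≤ (1 + s / δ) * d := by linarith

end RayGeometry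

section HaarNull

variable {E : Type*} [NormedAddCommGroup E] [NormedSpace ℝ E] [FiniteDimensional ℝ E]
  [MeasurableSpace E] [BorelSpace E] (μ : Measure E) [μ.IsAddHaarMeasure]

lemma LipschitzOnWith.addHaar_image_eq_zero {K : NNReal} {f : E → E} {s : Set E}
    (hf : LipschitzOnWith K f s) (hs : μ s = 0) : μ (f '' s) = 0 := by
  have hH : μH[Module.finrank ℝ E] s = 0 :=
    Measure.absolutelyContinuous_isAddHaarMeasure _ μ hs
  have himage := hf.hausdorffMeasure_image_le (d := Module.finrank ℝ E) (Nat.cast_nonneg _)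
  rw [hH, mul_zero, nonpos_iff_eq_zero] at himage
  exact Measure.absolutelyContinuous_isAddHaarMeasure μ _ himage

/-- The preimage is the image of a null set under `Function.invFunOn g`, which is Lipschitz. -/
lemma addHaar_preimage_inter_eq_zero {g : E → E} {s : Set E} {K : ℝ}
    (hg : ∀ x ∈ s, ∀ y ∈ s, dist x y ≤ K * dist (g x) (g y)) {Z : Set E} (hZ : μ Z = 0) :
    μ (g ⁻¹' Z ∩ s) = 0 := by
  set A := g ⁻¹' Z ∩ s
  set ψ := Function.invFunOn g A
  have hψ : ∀ a ∈ A, ψ (g a) ∈ A ∧ g (ψ (g a)) = g a := fun a ha =>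
    ⟨Function.invFunOn_mem ⟨a, ha, rfl⟩, Function.invFunOn_eq ⟨a, ha, rfl⟩⟩
  have hlip : LipschitzOnWith (Real.toNNReal K) ψ (g '' A) := by
    refine LipschitzOnWith.of_dist_le' ?_
    rintro _ ⟨a, ha, rfl⟩ _ ⟨b, hb, rfl⟩
    simpa only [(hψ a ha).2, (hψ b hb).2] using hg _ (hψ a ha).1.2 _ (hψ b hb).1.2
  have hsub : A ⊆ ψ '' (g '' A) := by
    intro a ha
    refine ⟨g a, Set.mem_image_of_mem g ha, dist_le_zero.1 ?_⟩
    simpa only [(hψ a ha).2, dist_self, mul_zero] using hg _ (hψ a ha).1.2 a ha.2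
  exact measure_mono_null hsub (hlip.addHaar_image_eq_zero μ
    (measure_mono_null (Set.image_subset_iff.2 Set.inter_subset_left) hZ))

end HaarNull

section Transport

variable {α : Type*} [MeasurableSpace α] {μ : Measure α} [IsFiniteMeasure μ]

lemma integrable_comp_of_ae_mem_compact {X : Type*} [TopologicalSpace X] [MeasurableSpace X]
    [OpensMeasurableSpace X] {K : Set X} (hK : IsCompact K) {v : X → ℝ} (hv : Continuous v)
    {g : α → X} (hg : AEMeasurable g μ) (hgK : ∀ᵐ x ∂μ, g x ∈ K) :
    Integrable (fun x => v (g x)) μ := by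
  obtain ⟨C, hC⟩ := hK.exists_bound_of_continuousOn hv.continuousOn
  exact Integrable.of_bound (hv.measurable.comp_aemeasurable hg).aestronglyMeasurable C
    (hgK.mono fun x hx => hC _ hx)

variable {d : ℕ} {K : Set (Euc d)} {g T : α → Euc d}

lemma integrable_norm_sub_of_ae_mem_compact (hK : IsCompact K) (hg : AEMeasurable g μ)
    (hT : AEMeasurable T μ) (hgK : ∀ᵐ x ∂μ, g x ∈ K) (hTK : ∀ᵐ x ∂μ, T x ∈ K) :
    Integrable (fun x => ‖g x - T x‖) μ := by
  have hpair : ∀ᵐ x ∂μ, (g x, T x) ∈ K ×ˢ K := by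
    filter_upwards [hgK, hTK] with x hgx hTx using Set.mk_mem_prod hgx hTx
  have hdist : Continuous fun p : Euc d × Euc d => ‖p.1 - p.2‖ := by fun_prop
  have hint := integrable_comp_of_ae_mem_compact (hK.prod hK) hdist (hg.prodMk hT) hpair
  exact hint

lemma integral_map_sub_integral_map (hK : IsCompact K) (hg : AEMeasurable g μ)
    (hT : AEMeasurable T μ) (hgK : ∀ᵐ x ∂μ, g x ∈ K) (hTK : ∀ᵐ x ∂μ, T x ∈ K)
    {v : Euc d → ℝ} (hv : Continuous v) :
    ∫ y, v y ∂μ.map g - ∫ y, v y ∂μ.map T = ∫ x, (v (g x) - v (T x)) ∂μ := by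
  rw [integral_map hg hv.aestronglyMeasurable, integral_map hT hv.aestronglyMeasurable,
    integral_sub (integrable_comp_of_ae_mem_compact hK hv hg hgK)
      (integrable_comp_of_ae_mem_compact hK hv hT hTK)]

lemma integral_map_sub_integral_map_le (hK : IsCompact K) (hg : AEMeasurable g μ)
    (hT : AEMeasurable T μ) (hgK : ∀ᵐ x ∂μ, g x ∈ K) (hTK : ∀ᵐ x ∂μ, T x ∈ K)
    {v : Euc d → ℝ} (hv : LipschitzWith 1 v) :
    ∫ y, v y ∂μ.map g - ∫ y, v y ∂μ.map T ≤ ∫ x, ‖g x - T x‖ ∂μ := by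
  rw [integral_map_sub_integral_map hK hg hT hgK hTK hv.continuous]
  exact integral_mono ((integrable_comp_of_ae_mem_compact hK hv.continuous hg hgK).sub
      (integrable_comp_of_ae_mem_compact hK hv.continuous hT hTK))
    (integrable_norm_sub_of_ae_mem_compact hK hg hT hgK hTK) fun x => hv.sub_le_norm_sub _ _

lemma W1_map_eq_integral_norm_sub (hK : IsCompact K) (hg : AEMeasurable g μ)
    (hT : AEMeasurable T μ) (hgK : ∀ᵐ x ∂μ, g x ∈ K) (hTK : ∀ᵐ x ∂μ, T x ∈ K)
    {u : Euc d → ℝ} (hu : LipschitzWith 1 u)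
    (hsat : ∀ᵐ x ∂μ, u (g x) - u (T x) = ‖g x - T x‖) :
    W1 (μ.map g) (μ.map T) = ∫ x, ‖g x - T x‖ ∂μ := by
  refine IsGreatest.csSup_eq ⟨⟨u, hu, ?_⟩, ?_⟩
  · rw [integral_map_sub_integral_map hK hg hT hgK hTK hu.continuous, integral_congr_ae hsat]
  · rintro _ ⟨v, hv, rfl⟩
    exact integral_map_sub_integral_map_le hK hg hT hgK hTK hv

/-- Equality holds in the integral of the pointwise bound `u (g x) - u (T x) ≤ ‖g x - T x‖`. -/
lemma ae_sub_eq_norm_of_isKantorovichPotential (hK : IsCompact K) (hg : AEMeasurable g μ)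
    (hT : AEMeasurable T μ) (hgK : ∀ᵐ x ∂μ, g x ∈ K) (hTK : ∀ᵐ x ∂μ, T x ∈ K)
    {u : Euc d → ℝ} (hu : IsKantorovichPotential u (μ.map g) (μ.map T))
    (hW : W1 (μ.map g) (μ.map T) = ∫ x, ‖g x - T x‖ ∂μ) :
    ∀ᵐ x ∂μ, u (g x) - u (T x) = ‖g x - T x‖ := by
  refine (integral_eq_iff_of_ae_le (f := fun x => u (g x) - u (T x))
    ((integrable_comp_of_ae_mem_compact hK hu.1.continuous hg hgK).sub
      (integrable_comp_of_ae_mem_compact hK hu.1.continuous hT hTK))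
    (integrable_norm_sub_of_ae_mem_compact hK hg hT hgK hTK)
    (ae_of_all _ fun x => hu.1.sub_le_norm_sub _ _)).1 ?_
  rw [← integral_map_sub_integral_map hK hg hT hgK hTK hu.1.continuous, hu.2, hW]

end Transport

/-- For `μ`-a.e. `x`, the segment from `x` to `T x` lies in the compact convex set `Ω`, has length
at least `ℓ`, and the 1-Lipschitz function `u₀` drops by exactly its length along it. -/
structure SaturatedRays {d : ℕ} (Ω : Set (Euc d)) (μ : Measure (Euc d)) (T : Euc d → Euc d)
    (u₀ : Euc d → ℝ) (ℓ : ℝ) : Prop where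
  isCompact : IsCompact Ω
  convex : Convex ℝ Ω
  ae_mem : ∀ᵐ x ∂μ, x ∈ Ω
  aemeasurable : AEMeasurable T μ
  ae_apply_mem : ∀ᵐ x ∂μ, T x ∈ Ω
  lipschitz : LipschitzWith 1 u₀
  ae_sub_eq_norm : ∀ᵐ x ∂μ, u₀ x - u₀ (T x) = ‖x - T x‖
  ae_le_norm : ∀ᵐ x ∂μ, ℓ ≤ ‖x - T x‖

section Interpolation

variable {d : ℕ} {Ω : Set (Euc d)} {μ : Measure (Euc d)} {T : Euc d → Euc d}
  {u₀ : Euc d → ℝ} {ℓ : ℝ}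

lemma aemeasurable_rayPoint (hT : AEMeasurable T μ) (t : ℝ) :
    AEMeasurable (fun x => rayPoint x (T x) t) μ := by
  unfold rayPoint
  fun_prop

/-- That is, `μ.map (fun x => rayPoint x (T x) s) ≪ volume`. -/
lemma measure_preimage_rayPoint_eq_zero (hac : μ ≪ volume) (hu₀ : LipschitzWith 1 u₀)
    (hsat : ∀ᵐ x ∂μ, u₀ x - u₀ (T x) = ‖x - T x‖) (hℓ : ∀ᵐ x ∂μ, ℓ ≤ ‖x - T x‖) {s : ℝ}
    (h0 : 0 ≤ s) (h1 : s < ℓ) {Z : Set (Euc d)} (hZ : volume Z = 0) :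
    μ ((fun x => rayPoint x (T x) s) ⁻¹' Z) = 0 := by
  rcases h0.eq_or_lt with rfl | hs
  · simpa using hac hZ
  set good := {x | ℓ ≤ ‖x - T x‖ ∧ u₀ x - u₀ (T x) = ‖x - T x‖}
  have hgood : μ goodᶜ = 0 := ae_iff.1 (hℓ.and hsat)
  have hnull : volume ((fun x => rayPoint x (T x) s) ⁻¹' Z ∩ good) = 0 :=
    addHaar_preimage_inter_eq_zero volume (fun x hx y hy => by
      simpa only [dist_eq_norm] using
        hu₀.norm_sub_le_mul_norm_rayPoint_sub hs h1 hx.1 hx.2 hy.1 hy.2) hZ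
  refine measure_mono_null (fun x hx => ?_) (measure_union_null (hac hnull) hgood)
  by_cases hx' : x ∈ good
  exacts [Or.inl ⟨hx, hx'⟩, Or.inr hx']

lemma SaturatedRays.of_isOptimalMap (hΩc : IsCompact Ω) (hΩconv : Convex ℝ Ω)
    [IsFiniteMeasure μ] {ν : Measure (Euc d)} [NeZero ν] (hμΩ : μ Ωᶜ = 0) (hνΩ : ν Ωᶜ = 0)
    (hT : IsOptimalMap T μ ν) (hu₀ : IsKantorovichPotential u₀ μ ν) :
    SaturatedRays Ω μ T u₀ (ell0 T μ) := by
  obtain ⟨hTmap, hTcost⟩ := hT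
  have hTm : AEMeasurable T μ := .of_map_ne_zero (hTmap ▸ NeZero.ne ν)
  have hμΩ' : ∀ᵐ x ∂μ, x ∈ Ω := ae_iff.2 hμΩ
  have hTΩ : ∀ᵐ x ∂μ, T x ∈ Ω := ae_of_ae_map hTm (by rw [hTmap]; exact ae_iff.2 hνΩ)
  refine ⟨hΩc, hΩconv, hμΩ', hTm, hTΩ, hu₀.1, ?_,
    ae_essInf_le (Filter.isBoundedUnder_of ⟨0, fun x => norm_nonneg _⟩)⟩
  simpa using ae_sub_eq_norm_of_isKantorovichPotential hΩc aemeasurable_id hTm hμΩ' hTΩ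
    (by rwa [Measure.map_id, hTmap]) (by rw [Measure.map_id, hTmap, ← hTcost]; rfl)

namespace SaturatedRays

variable {t : ℝ}

lemma ae_rayPoint_mem (h : SaturatedRays Ω μ T u₀ ℓ) (h0 : 0 ≤ t) (h1 : t ≤ ℓ) :
    ∀ᵐ x ∂μ, rayPoint x (T x) t ∈ Ω := by
  filter_upwards [h.ae_mem, h.ae_apply_mem, h.ae_le_norm] with x hx hTx hℓx
  exact h.convex.segment_subset hx hTx (rayPoint_mem_segment h0 (h1.trans hℓx))

lemma ae_rayPoint_sub_eq_norm (h : SaturatedRays Ω μ T u₀ ℓ) (h0 : 0 ≤ t) (h1 : t ≤ ℓ) :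
    ∀ᵐ x ∂μ, u₀ (rayPoint x (T x) t) - u₀ (T x) = ‖rayPoint x (T x) t - T x‖ := by
  filter_upwards [h.ae_sub_eq_norm, h.ae_le_norm] with x hsat hℓx
  rw [h.lipschitz.apply_rayPoint hsat h0 (h1.trans hℓx), norm_rayPoint_sub h0 (h1.trans hℓx)]
  linarith

lemma W1_map_rayPoint_eq_integral [IsFiniteMeasure μ] (h : SaturatedRays Ω μ T u₀ ℓ)
    (h0 : 0 ≤ t) (h1 : t ≤ ℓ) :
    W1 (μ.map fun x => rayPoint x (T x) t) (μ.map T) = ∫ x, ‖rayPoint x (T x) t - T x‖ ∂μ :=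
  W1_map_eq_integral_norm_sub h.isCompact (aemeasurable_rayPoint h.aemeasurable t) h.aemeasurable
    (h.ae_rayPoint_mem h0 h1) h.ae_apply_mem h.lipschitz (h.ae_rayPoint_sub_eq_norm h0 h1)

lemma W1_map_rayPoint [IsProbabilityMeasure μ] (h : SaturatedRays Ω μ T u₀ ℓ) (h0 : 0 ≤ t)
    (h1 : t ≤ ℓ) :
    W1 (μ.map fun x => rayPoint x (T x) t) (μ.map T) = ∫ x, ‖x - T x‖ ∂μ - t := by
  have hnorm : ∀ᵐ x ∂μ, ‖rayPoint x (T x) t - T x‖ = ‖x - T x‖ - t := by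
    filter_upwards [h.ae_le_norm] with x hℓx using norm_rayPoint_sub h0 (h1.trans hℓx)
  have hint : Integrable (fun x => ‖x - T x‖) μ := integrable_norm_sub_of_ae_mem_compact
    h.isCompact aemeasurable_id h.aemeasurable h.ae_mem h.ae_apply_mem
  rw [h.W1_map_rayPoint_eq_integral h0 h1, integral_congr_ae hnorm,
    integral_sub hint (integrable_const t)]
  simp

lemma map_map_rayPoint [IsFiniteMeasure μ] (h : SaturatedRays Ω μ T u₀ ℓ) (hac : μ ≪ volume)
    {s : ℝ} (h0 : 0 ≤ s) (h1 : s < ℓ) {u : Euc d → ℝ}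
    (hu : IsKantorovichPotential u (μ.map fun x => rayPoint x (T x) s) (μ.map T))
    {f : Euc d → Euc d} (hfm : Measurable f) {η : ℝ}
    (hf : ∀ y, DifferentiableAt ℝ u y → f y = y - η • gradient u y) :
    (μ.map fun x => rayPoint x (T x) s).map f = μ.map fun x => rayPoint x (T x) (s + η) := by
  have hsat : ∀ᵐ x ∂μ, u (rayPoint x (T x) s) - u (T x) = ‖rayPoint x (T x) s - T x‖ :=
    ae_sub_eq_norm_of_isKantorovichPotential h.isCompact (aemeasurable_rayPoint h.aemeasurable s)
      h.aemeasurable (h.ae_rayPoint_mem h0 h1.le) h.ae_apply_mem hu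
      (h.W1_map_rayPoint_eq_integral h0 h1.le)
  have hdiff : ∀ᵐ x ∂μ, DifferentiableAt ℝ u (rayPoint x (T x) s) :=
    ae_iff.2 (measure_preimage_rayPoint_eq_zero hac h.lipschitz h.ae_sub_eq_norm h.ae_le_norm h0 h1
      (ae_iff.1 (hu.1.ae_differentiableAt (μ := volume))))
  rw [AEMeasurable.map_map_of_aemeasurable hfm.aemeasurable (aemeasurable_rayPoint h.aemeasurable s)]
  refine Measure.map_congr ?_
  filter_upwards [hsat, hdiff, h.ae_le_norm] with x hsx hdx hℓx
  rw [Function.comp_apply, hf _ hdx, hu.1.rayPoint_sub_smul_gradient h0 (h1.trans_le hℓx) hsx hdx]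

end SaturatedRays

end Interpolation

lemma one_sub_pow_mul_mem_Ico_of_le_ceil_logb {b ℓ W : ℝ} (hb0 : 0 < b) (hb1 : b < 1)
    (hW : 0 < W) (hℓW : ℓ < W) {n : ℕ} (hn : (n : ℤ) ≤ ⌈Real.logb b (1 - ℓ / W)⌉ - 1) :
    (1 - b ^ n) * W ∈ Set.Ico 0 ℓ := by
  have hr : 0 < 1 - ℓ / W := sub_pos.2 ((div_lt_one hW).2 hℓW)
  have hlog : (n : ℝ) < Real.logb b (1 - ℓ / W) := by exact_mod_cast Int.lt_ceil.1 (by omega)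
  rw [Real.lt_logb_iff_rpow_lt_of_base_lt_one hb0 hb1 hr, Real.rpow_natCast] at hlog
  have hℓ : (1 - ℓ / W) * W = W - ℓ := by field_simp
  exact ⟨mul_nonneg (sub_nonneg.2 (pow_le_one₀ hb0.le hb1.le)) hW.le, by nlinarith⟩

theorem ttc_geometric_convergence_general {d : ℕ} (Ω : Set (Euc d))
    (hΩc : IsCompact Ω) (hΩconv : Convex ℝ Ω)
    (μ ν : Measure (Euc d)) [IsProbabilityMeasure μ] [IsProbabilityMeasure ν]
    (hμΩ : μ Ωᶜ = 0) (hνΩ : ν Ωᶜ = 0) (hac : μ ≪ volume)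
    (θ : ℝ) (hθ : θ ∈ Set.Ioo (0:ℝ) 1)
    (T₀ : Euc d → Euc d) (hT₀ : IsOptimalMap T₀ μ ν)
    (hℓpos : 0 < ell0 T₀ μ) (hℓlt : ell0 T₀ μ < W1 μ ν)
    (μseq : ℕ → Measure (Euc d)) (useq : ℕ → Euc d → ℝ) (η : ℕ → ℝ)
    (fseq : ℕ → Euc d → Euc d)
    (hμ0 : μseq 0 = μ)
    (hpot : ∀ n, IsKantorovichPotential (useq n) (μseq n) ν)
    (hη : ∀ n, η n = θ * W1 (μseq n) ν)
    (hfm : ∀ n, Measurable (fseq n))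
    (hf : ∀ n x, DifferentiableAt ℝ (useq n) x →
      fseq n x = x - η n • gradient (useq n) x)
    (hiter : ∀ n, μseq (n + 1) = Measure.map (fseq n) (μseq n))
    (N : ℤ) (hN : N = ⌈Real.logb (1 - θ) (1 - ell0 T₀ μ / W1 μ ν)⌉ - 1) :
    ∀ n : ℕ, (n : ℤ) ≤ N → W1 (μseq n) ν = (1 - θ) ^ n * W1 μ ν := by
  obtain ⟨hθ0, hθ1⟩ := hθ
  have hrays := SaturatedRays.of_isOptimalMap hΩc hΩconv hμΩ hνΩ hT₀ (hμ0 ▸ hpot 0)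
  set W := W1 μ ν
  set s : ℕ → ℝ := fun n => (1 - (1 - θ) ^ n) * W
  have hs : ∀ n : ℕ, (n : ℤ) ≤ N → s n ∈ Set.Ico 0 (ell0 T₀ μ) := fun n hn =>
    one_sub_pow_mul_mem_Ico_of_le_ceil_logb (by linarith) (by linarith) (hℓpos.trans hℓlt) hℓlt
      (hN ▸ hn)
  have hW : ∀ n : ℕ, (n : ℤ) ≤ N → W1 (μ.map fun x => rayPoint x (T₀ x) (s n)) ν = W - s n :=
    fun n hn => by rw [← hT₀.1, hrays.W1_map_rayPoint (hs n hn).1 (hs n hn).2.le, hT₀.2]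
  have hμseq : ∀ n : ℕ, (n : ℤ) ≤ N → μseq n = μ.map fun x => rayPoint x (T₀ x) (s n) := by
    intro n
    induction n with
    | zero => intro _; simp [s, hμ0]
    | succ n ih =>
      intro hn
      have hn' : (n : ℤ) ≤ N := by omega
      have hμn := ih hn'
      have hstep : s n + η n = s (n + 1) := by
        rw [hη, hμn, hW n hn']
        simp only [s, pow_succ]
        ring
      have hpotn : IsKantorovichPotential (useq n)
          (μ.map fun x => rayPoint x (T₀ x) (s n)) (μ.map T₀) := by
        rw [← hμn, hT₀.1]; exact hpot n
      rw [hiter, hμn, hrays.map_map_rayPoint hac (hs n hn').1 (hs n hn').2 hpotn (hfm n) (hf n),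
        hstep]
  intro n hn
  rw [hμseq n hn, hW n hn]
  ring

/-- geometric convergence rate of the TTC iteration up to index `N(θ)`. -/
theorem ttc_geometric_convergence {d : ℕ} (Ω : Set (Euc d))
    (hΩc : IsCompact Ω) (hΩconv : Convex ℝ Ω)
    (μ ν : Measure (Euc d)) [IsProbabilityMeasure μ] [IsProbabilityMeasure ν]
    (hμΩ : μ Ωᶜ = 0) (hνΩ : ν Ωᶜ = 0) (hac : μ ≪ volume)
    (θ : ℝ) (hθ : θ ∈ Set.Ioo (0:ℝ) 1)
    (T₀ : Euc d → Euc d) (hT₀ : IsOptimalMap T₀ μ ν)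
    (hℓpos : 0 < ell0 T₀ μ) (hℓlt : ell0 T₀ μ < W1 μ ν)
    (μseq : ℕ → Measure (Euc d)) (useq : ℕ → Euc d → ℝ) (η : ℕ → ℝ)
    (fseq : ℕ → Euc d → Euc d)
    (hμ0 : μseq 0 = μ)
    (hpot : ∀ n, IsKantorovichPotential (useq n) (μseq n) ν)
    (hη : ∀ n, η n = θ * W1 (μseq n) ν)
    (hfm : ∀ n, Measurable (fseq n))
    (hf : ∀ n x, DifferentiableAt ℝ (useq n) x →
      fseq n x = x - η n • gradient (useq n) x)
    (hf' : ∀ n x, ¬ DifferentiableAt ℝ (useq n) x → fseq n x = x)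
    (hiter : ∀ n, μseq (n + 1) = Measure.map (fseq n) (μseq n))
    (N : ℤ) (hN : N = ⌈Real.logb (1 - θ) (1 - ell0 T₀ μ / W1 μ ν)⌉ - 1) :
    ∀ n : ℕ, (n : ℤ) ≤ N → W1 (μseq n) ν = (1 - θ) ^ n * W1 μ ν :=
  ttc_geometric_convergence_general Ω hΩc hΩconv μ ν hμΩ hνΩ hac θ hθ T₀ hT₀ hℓpos hℓlt μseq useq η
    fseq hμ0 hpot hη hfm hf hiter N hN
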